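/- Let k be a number field, p a prime number, and S any finite set of nonzero primes of O_k. Then the Kummer group V_S(k) is a finite group. -/

import Mathlib

open NumberField IsDedekindDomain

/-- The subgroup of `p`-th powers in a commutative group `G`. -/
def pPowers (G : Type*) [CommGroup G] (p : ℕ) : Subgroup G :=
  (powMonoidHom p : G →* G).range

/-- The map `k^× → (k_v)^×` into the units of the `v`-adic completion. -/
noncomputable def localUnitsMap (k : Type*) [Field k] [NumberField k]
    (v : HeightOneSpectrum (𝓞 k)) : kˣ →* (v.adicCompletion k)ˣ :=
  Units.map (algebraMap k (v.adicCompletion k)).toMonoidHom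

/-- The `v`-adic valuation of a nonzero element of `k`, as an element of
`Multiplicative ℤ` (a uniformizer is sent to `ofAdd (-1)`). -/
noncomputable def mulValHom (k : Type*) [Field k] [NumberField k]
    (v : HeightOneSpectrum (𝓞 k)) : kˣ →* Multiplicative ℤ :=
  (WithZero.unitsWithZeroEquiv.toMonoidHom).comp
    (Units.map ((v.valuation (K := k)).toMonoidWithZeroHom.toMonoidHom))

/-- The normalized additive `v`-adic valuation `v(a) ∈ ℤ` of `a ∈ k^×`
(a uniformizer has valuation `1`). -/
noncomputable def addVal (k : Type*) [Field k] [NumberField k]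
    (v : HeightOneSpectrum (𝓞 k)) (a : kˣ) : ℤ :=
  - Multiplicative.toAdd (mulValHom k v a)

/-- The additive `v`-adic valuation modulo `p`, as a group homomorphism. -/
noncomputable def valModP (k : Type*) [Field k] [NumberField k] (p : ℕ)
    (v : HeightOneSpectrum (𝓞 k)) : kˣ →* Multiplicative (ZMod p) :=
  (AddMonoidHom.toMultiplicative (Int.castAddHom (ZMod p))).comp (mulValHom k v)

/-- The subgroup of those `a ∈ k^×` which are `p`-th powers in the completion `k_v`. -/
noncomputable def locallyPthPower (k : Type*) [Field k] [NumberField k] (p : ℕ)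
    (v : HeightOneSpectrum (𝓞 k)) : Subgroup kˣ :=
  Subgroup.comap (localUnitsMap k v) (pPowers (v.adicCompletion k)ˣ p)

/-- The subgroup of those `a ∈ k^×` which are `p`-th powers in `k_v` for all `v ∈ S` and
whose `v`-adic valuation is divisible by `p` for every nonzero prime `v ∉ S`. -/
noncomputable def VSpre (k : Type*) [Field k] [NumberField k] (p : ℕ)
    (S : Set (HeightOneSpectrum (𝓞 k))) : Subgroup kˣ :=
  (⨅ v ∈ S, locallyPthPower k p v) ⊓ (⨅ v ∈ Sᶜ, (valModP k p v).ker)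

/-- The Kummer group `V_S(k)`, the subgroup of `k^×/(k^×)^p` consisting of the classes of
those `a ∈ k^×` which are `p`-th powers in `k_v` for every `v ∈ S` and whose `v`-adic
valuation is divisible by `p` for every nonzero prime `v ∉ S`. -/
noncomputable def VS (k : Type*) [Field k] [NumberField k] (p : ℕ)
    (S : Set (HeightOneSpectrum (𝓞 k))) : Subgroup (kˣ ⧸ pPowers kˣ p) :=
  (VSpre k p S).map (QuotientGroup.mk' (pPowers kˣ p))


/-!
An element of `V_S(k)` has valuation divisible by `p` at every prime (at `v ∈ S` because it is a
`p`-th power in `k_v`), so `V_S(k)` lies in the Selmer group `k(∅, p)`. For `a` in that group the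
principal ideal `(a)` is the `p`-th power of a fractional ideal `I`, and `a ↦ [I] ∈ Cl(O_k)` has
its fibres inside cosets of the image of `O_k^×`. That image is a quotient of `O_k^× / (O_k^×)^p`,
which is finite because `O_k^×` is finitely generated; the class group is finite as well.
-/

open FractionalIdeal
open scoped nonZeroDivisors

theorem finite_of_forall_eq_imp_inv_mul_mem {G β : Type*} [Group G] [Finite β] (H : Subgroup G)
    [Finite H] (f : G → β) (h : ∀ x y, f x = f y → x⁻¹ * y ∈ H) : Finite G := by
  set r : G → G := fun x => Function.invFun f (f x)
  have hr : ∀ x, f (r x) = f x := fun x => Function.invFun_eq ⟨x, rfl⟩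
  refine Finite.of_injective (fun x => (f x, (⟨(r x)⁻¹ * x, h _ _ (hr x)⟩ : H))) ?_
  intro x y hxy
  simp only [Prod.mk.injEq, Subtype.mk.injEq] at hxy
  simpa [r, hxy.1] using hxy.2

section Domain

variable {R : Type*} [CommRing R] [IsDomain R] {K : Type*} [Field K] [Algebra R K]
  [IsFractionRing R K]

theorem ClassGroup.mk_eq_mk_iff {I J : (FractionalIdeal R⁰ K)ˣ} :
    ClassGroup.mk K I = ClassGroup.mk K J ↔ ∃ x : Kˣ, I * toPrincipalIdeal R K x = J := by
  rw [← (ClassGroup.equiv K).injective.eq_iff, ClassGroup.equiv_mk, ClassGroup.equiv_mk,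
    QuotientGroup.mk'_eq_mk']
  simp only [canonicalEquiv_self, MonoidHom.mem_range]
  exact ⟨fun ⟨_, ⟨x, hx⟩, h⟩ => ⟨x, hx ▸ h⟩, fun ⟨x, h⟩ => ⟨_, ⟨x, rfl⟩, h⟩⟩

theorem toPrincipalIdeal_eq_one_iff {x : Kˣ} :
    toPrincipalIdeal R K x = 1 ↔ x ∈ (Units.map (algebraMap R K : R →* K)).range := by
  rw [toPrincipalIdeal_eq_iff, Units.val_one, ← spanSingleton_one,
    spanSingleton_eq_spanSingleton]
  constructor
  · rintro ⟨z, hz⟩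
    refine ⟨z⁻¹, Units.ext ?_⟩
    rw [Units.smul_def, Algebra.smul_def] at hz
    simp [eq_inv_of_mul_eq_one_right hz]
  · rintro ⟨u, rfl⟩
    exact ⟨u⁻¹, by simp [Units.smul_def, Algebra.smul_def]⟩

theorem exists_eq_unit_mul_pow_mul_of_classGroup_mk_eq {n : ℕ} {a b : Kˣ}
    {I J : (FractionalIdeal R⁰ K)ˣ} (ha : I ^ n = toPrincipalIdeal R K a)
    (hb : J ^ n = toPrincipalIdeal R K b) (h : ClassGroup.mk K I = ClassGroup.mk K J) :
    ∃ (u : Rˣ) (t : Kˣ), b = Units.map (algebraMap R K : R →* K) u * t ^ n * a := by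
  obtain ⟨t, rfl⟩ := ClassGroup.mk_eq_mk_iff.mp h
  have : toPrincipalIdeal R K (b * (t ^ n * a)⁻¹) = 1 := by
    rw [map_mul, map_inv, map_mul, map_pow, ← hb, ← ha, mul_pow, mul_comm (I ^ n),
      mul_inv_cancel]
  obtain ⟨u, hu⟩ := toPrincipalIdeal_eq_one_iff.mp this
  exact ⟨u, t, by rw [hu, mul_assoc, inv_mul_cancel_right]⟩

end Domain

section Dedekind

variable {R : Type*} [CommRing R] [IsDedekindDomain R] {K : Type*} [Field K] [Algebra R K]
  [IsFractionRing R K] {n : ℕ}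

theorem FractionalIdeal.count_spanSingleton (v : HeightOneSpectrum R) (x : Kˣ) :
    count K v (spanSingleton R⁰ (x : K)) = -(v.valuationOfNeZero x).toAdd := by
  set s := IsLocalization.sec R⁰ (x : K)
  have hsec : (x : K) * algebraMap R K s.2 = algebraMap R K s.1 :=
    IsLocalization.sec_spec R⁰ (x : K)
  have hs2 : algebraMap R K s.2 ≠ 0 :=
    IsFractionRing.to_map_ne_zero_of_mem_nonZeroDivisors s.2.2
  have hfactor : spanSingleton R⁰ (x : K)
      = spanSingleton R⁰ (algebraMap R K s.2)⁻¹ * (Ideal.span {s.1} : FractionalIdeal R⁰ K) := by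
    rw [coeIdeal_span_singleton, spanSingleton_mul_spanSingleton, ← hsec]
    field_simp
  rw [count_well_defined K v (spanSingleton_ne_zero_iff.mpr x.ne_zero) hfactor]
  change _ = -(v.valuationOfNeZeroToFun x).toAdd
  rw [HeightOneSpectrum.valuationOfNeZeroToFun, toAdd_ofAdd]
  ring

theorem FractionalIdeal.exists_pow_eq_of_forall_dvd_count {I : FractionalIdeal R⁰ K} (hI : I ≠ 0)
    (h : ∀ v : HeightOneSpectrum R, (n : ℤ) ∣ count K v I) :
    ∃ J : FractionalIdeal R⁰ K, J ≠ 0 ∧ J ^ n = I := by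
  set e : HeightOneSpectrum R → ℤ := fun v => count K v I / n
  have he : ∀ v, e v * n = count K v I := fun v => Int.ediv_mul_cancel (h v)
  have hsupp : (Function.mulSupport fun v : HeightOneSpectrum R =>
      (v.asIdeal : FractionalIdeal R⁰ K) ^ e v).Finite := by
    refine (Filter.eventually_cofinite.mp (finite_factors I)).subset fun v hv hv0 => hv ?_
    simp [e, hv0]
  refine ⟨∏ᶠ v, (v.asIdeal : FractionalIdeal R⁰ K) ^ e v,
    finprod_ne_zero fun v => zpow_ne_zero _ (coeIdeal_ne_zero.mpr v.ne_bot), ?_⟩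
  rw [finprod_pow hsupp]
  conv_rhs => rw [← finprod_heightOneSpectrum_factorization' K hI]
  refine finprod_congr fun v => ?_
  rw [← zpow_natCast, ← zpow_mul, he]

theorem exists_pow_eq_toPrincipalIdeal {x : Kˣ}
    (h : ∀ v : HeightOneSpectrum R, (n : ℤ) ∣ (v.valuationOfNeZero x).toAdd) :
    ∃ I : (FractionalIdeal R⁰ K)ˣ, I ^ n = toPrincipalIdeal R K x := by
  obtain ⟨J, hJ0, hJ⟩ := exists_pow_eq_of_forall_dvd_count
    (spanSingleton_ne_zero_iff (R := R).mpr x.ne_zero) fun v => by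
      rw [count_spanSingleton]
      exact (h v).neg_right
  exact ⟨Units.mk0 J hJ0, Units.ext (by simpa using hJ)⟩

theorem IsDedekindDomain.HeightOneSpectrum.valuationOfNeZeroMod_mk_eq_one_iff
    (v : HeightOneSpectrum R) (x : Kˣ) :
    v.valuationOfNeZeroMod n (QuotientGroup.mk x) = 1 ↔
      (n : ℤ) ∣ (v.valuationOfNeZero x).toAdd := by
  have : v.valuationOfNeZeroMod n (QuotientGroup.mk x) = Multiplicative.ofAdd
      (Int.quotientZMultiplesNatEquivZMod n (QuotientAddGroup.mk (v.valuationOfNeZero x).toAdd)) :=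
    rfl
  rw [this, ofAdd_eq_one, AddEquivClass.map_eq_zero_iff, QuotientAddGroup.eq_zero_iff,
    Int.mem_zmultiples_iff]

namespace IsDedekindDomain.selmerGroup

theorem finite_range_fromUnit [(powMonoidHom n : Rˣ →* Rˣ).range.FiniteIndex] :
    Finite (fromUnit (R := R) (K := K) (n := n)).range := by
  have hker : (powMonoidHom n : Rˣ →* Rˣ).range ≤ (fromUnit (R := R) (K := K) (n := n)).ker := by
    rintro _ ⟨u, rfl⟩
    exact Subtype.ext <| (QuotientGroup.eq_one_iff _).mpr
      ⟨Units.map (algebraMap R K : R →* K) u, by simp⟩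
  have := Subgroup.finiteIndex_of_le hker
  exact Finite.of_equiv _ (QuotientGroup.quotientKerEquivRange fromUnit).toEquiv

theorem exists_pow_eq_toPrincipalIdeal_out (x : selmerGroup (R := R) (K := K) (S := ∅) (n := n)) :
    ∃ I : (FractionalIdeal R⁰ K)ˣ,
      I ^ n = toPrincipalIdeal R K (x : Kˣ ⧸ (powMonoidHom n : Kˣ →* Kˣ).range).out := by
  refine exists_pow_eq_toPrincipalIdeal fun v => ?_
  rw [← HeightOneSpectrum.valuationOfNeZeroMod_mk_eq_one_iff, QuotientGroup.out_eq']
  exact x.2 v (Set.notMem_empty v)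

theorem inv_mul_mem_range_fromUnit_of_classGroup_mk_eq
    {x y : selmerGroup (R := R) (K := K) (S := ∅) (n := n)} {I J : (FractionalIdeal R⁰ K)ˣ}
    (hI : I ^ n = toPrincipalIdeal R K (x : Kˣ ⧸ (powMonoidHom n : Kˣ →* Kˣ).range).out)
    (hJ : J ^ n = toPrincipalIdeal R K (y : Kˣ ⧸ (powMonoidHom n : Kˣ →* Kˣ).range).out)
    (h : ClassGroup.mk K I = ClassGroup.mk K J) :
    x⁻¹ * y ∈ (fromUnit (R := R) (K := K) (n := n)).range := by
  obtain ⟨u, t, hut⟩ := exists_eq_unit_mul_pow_mul_of_classGroup_mk_eq hI hJ h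
  refine ⟨u, Subtype.ext ?_⟩
  change QuotientGroup.mk _ = (x : Kˣ ⧸ (powMonoidHom n : Kˣ →* Kˣ).range)⁻¹ *
    (y : Kˣ ⧸ (powMonoidHom n : Kˣ →* Kˣ).range)
  rw [← QuotientGroup.out_eq' (x : Kˣ ⧸ (powMonoidHom n : Kˣ →* Kˣ).range),
    ← QuotientGroup.out_eq' (y : Kˣ ⧸ (powMonoidHom n : Kˣ →* Kˣ).range), ← QuotientGroup.mk_inv,
    ← QuotientGroup.mk_mul, QuotientGroup.eq, hut]
  exact ⟨t, by simp⟩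

end IsDedekindDomain.selmerGroup

open selmerGroup in
theorem IsDedekindDomain.finite_selmerGroup_empty [Finite (ClassGroup R)]
    [(powMonoidHom n : Rˣ →* Rˣ).range.FiniteIndex] :
    Finite (selmerGroup (R := R) (K := K) (S := ∅) (n := n)) := by
  have := finite_range_fromUnit (R := R) (K := K) (n := n)
  choose I hI using exists_pow_eq_toPrincipalIdeal_out (R := R) (K := K) (n := n)
  exact finite_of_forall_eq_imp_inv_mul_mem fromUnit.range (fun x => ClassGroup.mk K (I x))
    fun x y => inv_mul_mem_range_fromUnit_of_classGroup_mk_eq (hI x) (hI y)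

end Dedekind

section NumberField

variable {k : Type*} [Field k] [NumberField k]

theorem mulValHom_eq_valuationOfNeZero (v : HeightOneSpectrum (𝓞 k)) :
    mulValHom k v = v.valuationOfNeZero := by
  refine MonoidHom.ext fun x => ?_
  rw [← WithZero.coe_inj, HeightOneSpectrum.valuationOfNeZero_eq]
  simp [mulValHom, WithZero.unitsWithZeroEquiv, WithZero.coe_unzero]

theorem valModP_apply (p : ℕ) (v : HeightOneSpectrum (𝓞 k)) (x : kˣ) :
    valModP k p v x = v.valuationOfNeZeroMod p (QuotientGroup.mk x) := by
  rw [valModP, mulValHom_eq_valuationOfNeZero]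
  rfl

theorem locallyPthPower_le_ker_valModP (p : ℕ) (v : HeightOneSpectrum (𝓞 k)) :
    locallyPthPower k p v ≤ (valModP k p v).ker := by
  rintro x ⟨y, hy⟩
  have hy' : (y : v.adicCompletion k) ^ p = algebraMap k (v.adicCompletion k) x :=
    congrArg Units.val hy
  have hpow : Valued.v (y : v.adicCompletion k) ^ p = v.valuation k (x : k) := by
    rw [← map_pow, hy']
    exact v.valuedAdicCompletion_eq_valuation' (x : k)
  obtain ⟨m, hm⟩ := WithZero.ne_zero_iff_exists.mp
    ((Valued.v : Valuation (v.adicCompletion k) _).ne_zero_iff.mpr y.ne_zero)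
  rw [← hm, ← HeightOneSpectrum.valuationOfNeZero_eq, ← WithZero.coe_pow, WithZero.coe_inj] at hpow
  rw [MonoidHom.mem_ker, valModP_apply, HeightOneSpectrum.valuationOfNeZeroMod_mk_eq_one_iff]
  exact ⟨m.toAdd, by rw [← hpow, toAdd_pow, nsmul_eq_mul]⟩

theorem VS_le_selmerGroup_empty (p : ℕ) (S : Set (HeightOneSpectrum (𝓞 k))) :
    VS k p S ≤ selmerGroup (R := 𝓞 k) (K := k) (S := ∅) (n := p) := by
  rintro _ ⟨a, ⟨haS, haSc⟩, rfl⟩ v -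
  have ha : a ∈ (valModP k p v).ker := by
    by_cases hv : v ∈ S
    · exact locallyPthPower_le_ker_valModP p v
        (Subgroup.mem_iInf.mp (Subgroup.mem_iInf.mp haS v) hv)
    · exact Subgroup.mem_iInf.mp (Subgroup.mem_iInf.mp haSc v) hv
  rwa [MonoidHom.mem_ker, valModP_apply] at ha

end NumberField

/-- for any finite set `S` of nonzero primes of `O_k`, the Kummer group
`V_S(k)` is finite. -/
theorem statement7 (k : Type) [Field k] [NumberField k] (p : ℕ) (hp : p.Prime)
    (S : Finset (HeightOneSpectrum (𝓞 k))) :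
    Finite (VS k p ↑S) := by
  have : Group.FG (𝓞 k)ˣ := Group.fg_iff_monoid_fg.mpr inferInstance
  have := Subgroup.finiteIndex_range_powMonoidHom_of_fg (𝓞 k)ˣ hp.ne_zero
  have hle := VS_le_selmerGroup_empty p (S : Set (HeightOneSpectrum (𝓞 k)))
  -- `pPowers kˣ p` unfolds to `(powMonoidHom p).range`, which instance search does not see.
  exact @Finite.of_injective _ _ finite_selmerGroup_empty _ (Subgroup.inclusion_injective hle)
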